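/- Let G be a planar digraph with g(G) = 3 whose underlying graph is a partial 3-tree (subgraph of a 3-tree). Then ν(G) = 3, i.e., the arcs of G admit three pairwise disjoint dicycle-transversals. -/

import Mathlib

/-- A directed cycle (dicycle) in a digraph with arc relation `A`, given by its list of
vertices: all vertices distinct, consecutive vertices joined by arcs, and an arc from the
last vertex back to the first. -/
def IsDicycle {V : Type*} (A : V → V → Prop) : List V → Prop
  | [] => False
  | v :: l => (v :: l).Nodup ∧ List.Chain A v (l ++ [v])

/-- The arcs of a cyclic list of vertices (consecutive pairs, including the wrap-around). -/
def cycleArcs {V : Type*} : List V → List (V × V)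
  | [] => []
  | v :: l => List.zip (v :: l) (l ++ [v])

/-- A relation is acyclic if it admits no dicycle. -/
def AcyclicRel {V : Type*} (A : V → V → Prop) : Prop := ∀ l : List V, ¬ IsDicycle A l

/-- A transversal of the digraph `A`: a set of arcs meeting every dicycle. -/
def IsTransversal {V : Type*} (A : V → V → Prop) (T : Set (V × V)) : Prop :=
  (∀ e ∈ T, A e.1 e.2) ∧ ∀ l, IsDicycle A l → ∃ e ∈ cycleArcs l, e ∈ T

/-- The digraph `A` has a packing of `k` pairwise disjoint transversals. -/
def HasPacking {V : Type*} (A : V → V → Prop) (k : ℕ) : Prop :=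
  ∃ T : Fin k → Set (V × V), (∀ i, IsTransversal A (T i)) ∧
    Pairwise fun i j => Disjoint (T i) (T j)

/-- `ν(G)`: the maximum size of a packing of disjoint dicycle-transversals. -/
noncomputable def dinu {V : Type*} (A : V → V → Prop) : ℕ := sSup {k | HasPacking A k}

/-- `g(G)`: the length of a shortest dicycle. -/
noncomputable def digirth {V : Type*} (A : V → V → Prop) : ℕ :=
  sInf {n | ∃ l, IsDicycle A l ∧ l.length = n}

/-- The relation giving a complete graph (triangle) on the three vertices `a, b, c`. -/
def triRel {V : Type*} (a b c : V) : V → V → Prop := fun x y =>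
  x ∈ ({a, b, c} : Set V) ∧ y ∈ ({a, b, c} : Set V)

/-- `IsThreeTree G S` : the graph `G` with vertex support `S` is a 3-tree, i.e. it is
obtained from a triangle `K₃` by repeatedly choosing a triangle in the current graph and
adding a new vertex adjacent to exactly its three vertices. -/
inductive IsThreeTree {V : Type*} [DecidableEq V] : SimpleGraph V → Finset V → Prop
  | base (a b c : V) (hab : a ≠ b) (hac : a ≠ c) (hbc : b ≠ c) :
      IsThreeTree (SimpleGraph.fromRel (triRel a b c)) {a, b, c}
  | step (G : SimpleGraph V) (S : Finset V) (a b c v : V)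
      (hG : IsThreeTree G S)
      (ha : a ∈ S) (hb : b ∈ S) (hc : c ∈ S) (hv : v ∉ S)
      (hab : G.Adj a b) (hbc : G.Adj b c) (hac : G.Adj a c) :
      IsThreeTree
        (G ⊔ SimpleGraph.fromRel (fun x y => x = v ∧ y ∈ ({a, b, c} : Set V)))
        (insert v S)

/-- `H` is a minor of `G`: there are pairwise disjoint nonempty connected branch sets in `G`,
one for each vertex of `H`, such that every edge of `H` is realized by an edge of `G`
between the corresponding branch sets. -/
def IsMinorOf {W V : Type*} (H : SimpleGraph W) (G : SimpleGraph V) : Prop :=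
  ∃ f : W → Set V,
    (∀ w, (f w).Nonempty) ∧
    (∀ w, (G.induce (f w)).Connected) ∧
    (Pairwise fun w₁ w₂ => Disjoint (f w₁) (f w₂)) ∧
    ∀ w₁ w₂, H.Adj w₁ w₂ → ∃ a ∈ f w₁, ∃ b ∈ f w₂, G.Adj a b

/-- `K₅ − e`: the complete graph on five vertices with one edge removed. -/
def K5e : SimpleGraph (Fin 5) := (SimpleGraph.completeGraph (Fin 5)).deleteEdges {s(0, 1)}

/-- A graph is planar iff it has no `K₅` minor and no `K₃,₃` minor (Wagner's theorem). -/
def IsPlanar {V : Type*} (G : SimpleGraph V) : Prop :=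
  ¬ IsMinorOf (SimpleGraph.completeGraph (Fin 5)) G ∧
    ¬ IsMinorOf (completeBipartiteGraph (Fin 3) (Fin 3)) G

/-!
Three linear orders of the vertices suffice: if every arc goes forward in at least two of them,
then the arcs going backward in the `k`-th order form a dicycle-transversal (no dicycle goes
forward all the way round), and the three transversals are pairwise disjoint. For a 3-tree with
an orientation of some of its edges without antiparallel arcs such orders exist, by induction
along the construction: a new vertex joined to a triangle can be inserted into each of the three
orders so that each of its arcs goes forward twice, provided each edge of the triangle goes
forward in some order, which is therefore carried along as part of the invariant. The finitely
many configurations on a triangle are checked by `decide`. Conversely a dicycle of length 3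
meets at most three disjoint transversals.
-/

open Finset

section Dicycles

variable {V : Type*} {A : V → V → Prop}

theorem isDicycle_cons_iff {v : V} {t : List V} :
    IsDicycle A (v :: t) ↔ (v :: t).Nodup ∧ ∀ e ∈ cycleArcs (v :: t), A e.1 e.2 := by
  change (v :: t).Nodup ∧ List.IsChain A (v :: t ++ [v]) ↔ _
  rw [List.isChain_cons_append_singleton_iff_forall₂, List.forall₂_iff_zip]
  simp [cycleArcs]

theorem IsDicycle.rel_of_mem_cycleArcs {l : List V} (hl : IsDicycle A l) {e : V × V}
    (he : e ∈ cycleArcs l) : A e.1 e.2 := by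
  cases l with
  | nil => exact hl.elim
  | cons v t => exact (isDicycle_cons_iff.1 hl).2 e he

theorem IsDicycle.of_forall_cycleArcs {R : V → V → Prop} {l : List V} (hl : IsDicycle A l)
    (hR : ∀ e ∈ cycleArcs l, R e.1 e.2) : IsDicycle R l := by
  cases l with
  | nil => exact hl.elim
  | cons v t => exact isDicycle_cons_iff.2 ⟨(isDicycle_cons_iff.1 hl).1, hR⟩

theorem length_cycleArcs_le (l : List V) : (cycleArcs l).length ≤ l.length := by
  cases l with
  | nil => simp [cycleArcs]
  | cons v t => simp [cycleArcs]

theorem not_isDicycle_lt {α : Type*} [Preorder α] (g : V → α) (l : List V) :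
    ¬ IsDicycle (fun x y => g x < g y) l := by
  cases l with
  | nil => exact id
  | cons v t =>
    intro hl
    have hchain : List.IsChain (· < ·) ((v :: (t ++ [v])).map g) := List.isChain_map g |>.2 hl.2
    exact lt_irrefl _ <| List.rel_of_pairwise_cons (List.isChain_iff_pairwise.1 hchain)
      (List.mem_map_of_mem (f := g) (List.mem_append_right t (List.mem_singleton_self v)))

theorem isDicycle_singleton {v : V} : IsDicycle A [v] ↔ A v v := by
  change [v].Nodup ∧ List.IsChain A [v, v] ↔ _
  simp

theorem isDicycle_pair {u w : V} (huw : u ≠ w) (h₁ : A u w) (h₂ : A w u) : IsDicycle A [u, w] :=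
  ⟨by simp [huw], show List.IsChain A [u, w, u] by simp [h₁, h₂]⟩

theorem digirth_le_length {l : List V} (hl : IsDicycle A l) : digirth A ≤ l.length :=
  Nat.sInf_le ⟨l, hl, rfl⟩

theorem exists_isDicycle_length_eq_digirth (h : digirth A ≠ 0) :
    ∃ l, IsDicycle A l ∧ l.length = digirth A :=
  Nat.sInf_mem (Nat.nonempty_of_pos_sInf (Nat.pos_of_ne_zero h))

theorem isTransversal_setOf_not_lt {α : Type*} [Preorder α] (g : V → α) :
    IsTransversal A {e | A e.1 e.2 ∧ ¬ g e.1 < g e.2} := by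
  refine ⟨fun e he => he.1, fun l hl => ?_⟩
  by_contra! hfwd
  refine not_isDicycle_lt g l (hl.of_forall_cycleArcs fun e he => ?_)
  by_contra hlt
  exact hfwd e he ⟨hl.rel_of_mem_cycleArcs he, hlt⟩

theorem hasPacking_of_subsingleton_setOf_not_lt {α : Type*} [Preorder α] {n : ℕ}
    (f : Fin n → V → α) (hf : ∀ u w, A u w → {k | ¬ f k u < f k w}.Subsingleton) :
    HasPacking A n := by
  refine ⟨fun k => {e | A e.1 e.2 ∧ ¬ f k e.1 < f k e.2}, fun k => isTransversal_setOf_not_lt _,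
    fun i j hij => Set.disjoint_left.2 ?_⟩
  rintro e ⟨he, hi⟩ ⟨-, hj⟩
  exact hij (hf _ _ he hi hj)

theorem HasPacking.le_length {k : ℕ} (hk : HasPacking A k) {l : List V} (hl : IsDicycle A l) :
    k ≤ l.length := by
  classical
  obtain ⟨T, hT, hdisj⟩ := hk
  choose e he heT using fun i => (hT i).2 l hl
  have hinj : Set.InjOn e (univ : Finset (Fin k)) := fun i _ j _ hij => by
    by_contra hne
    exact Set.disjoint_left.1 (hdisj hne) (heT i) (hij ▸ heT j)
  calc k = #(univ : Finset (Fin k)) := (card_fin k).symm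
    _ ≤ #(cycleArcs l).toFinset :=
      card_le_card_of_injOn e (fun i _ => List.mem_toFinset.2 (he i)) hinj
    _ ≤ (cycleArcs l).length := List.toFinset_card_le _
    _ ≤ l.length := length_cycleArcs_le l

theorem dinu_eq_of_hasPacking {k : ℕ} (hk : HasPacking A k) {l : List V} (hl : IsDicycle A l)
    (hlen : l.length = k) : dinu A = k :=
  IsGreatest.csSup_eq ⟨hk, fun _ hm => hlen ▸ hm.le_length hl⟩

end Dicycles

theorem exists_perm_lt_iff_lt {α : Type*} [LinearOrder α] {n : ℕ} {g : Fin n → α}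
    (hg : Function.Injective g) : ∃ σ : Equiv.Perm (Fin n), ∀ i j, σ i < σ j ↔ g i < g j := by
  have hmono : StrictMono (g ∘ Tuple.sort g) :=
    (Tuple.monotone_sort g).strictMono_of_injective (hg.comp (Tuple.sort g).injective)
  refine ⟨(Tuple.sort g).symm, fun i j => ?_⟩
  rw [← hmono.lt_iff_lt]
  simp

theorem exists_cut {ι α : Type*} [Fintype ι] [LinearOrder α] [DenselyOrdered α] [NoMinOrder α]
    [NoMaxOrder α] [Nonempty α] (g : ι → α) (P : ι → Prop) [DecidablePred P]
    (hP : ∀ i j, P i → ¬ P j → g i < g j) : ∃ q, ∀ i, g i ≠ q ∧ (g i < q ↔ P i) := by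
  have hsep : ∀ x ∈ ({i | P i} : Finset ι).image g, ∀ y ∈ ({i | ¬ P i} : Finset ι).image g,
      x < y := by
    simp only [mem_image, mem_filter, mem_univ, true_and, forall_exists_index, and_imp]
    rintro _ i hi rfl _ j hj rfl
    exact hP i j hi hj
  obtain ⟨q, hlo, hhi⟩ := Order.exists_between_finsets _ _ hsep
  refine ⟨q, fun i => ?_⟩
  by_cases hi : P i
  · have := hlo (g i) (mem_image_of_mem g (by simpa using hi))
    exact ⟨this.ne, iff_of_true this hi⟩
  · have := hhi (g i) (mem_image_of_mem g (by simpa using hi))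
    exact ⟨this.ne', iff_of_false this.not_gt hi⟩

theorem card_filter_lt_add_card_filter_gt {ι α : Type*} [Fintype ι] [LinearOrder α]
    {x y : ι → α} (h : ∀ k, x k ≠ y k) :
    #{k | x k < y k} + #{k | y k < x k} = Fintype.card ι := by
  rw [← card_univ, ← card_filter_add_card_filter_not (s := univ) (fun k => x k < y k)]
  congr 2
  exact filter_congr fun k _ => by rw [not_lt, (h k).symm.le_iff_lt]

theorem subsingleton_setOf_not_of_two_le_card {p : Fin 3 → Prop} [DecidablePred p]
    (h : 2 ≤ #{k | p k}) : {k | ¬ p k}.Subsingleton := by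
  intro i hi j hj
  by_contra hij
  have hsub : ({k | p k} : Finset (Fin 3)) ⊆ {i, j}ᶜ := fun k hk => by
    simp only [mem_filter, mem_univ, true_and] at hk
    simp only [mem_compl, mem_insert, mem_singleton, not_or]
    exact ⟨fun hki => hi (hki ▸ hk), fun hkj => hj (hkj ▸ hk)⟩
  have := card_le_card hsub
  rw [card_compl, card_pair hij, Fintype.card_fin] at this
  omega

set_option maxRecDepth 10000 in
set_option synthInstance.maxSize 2048 in
theorem exists_perms_of_asymm : ∀ o : Fin 3 → Fin 3 → Bool, (∀ i j, o i j → ¬ o j i) →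
    ∃ σ : Fin 3 → Equiv.Perm (Fin 3), (∀ i j, i ≠ j → ∃ k, σ k i < σ k j) ∧
      ∀ i j, o i j → 2 ≤ #{k | σ k i < σ k j} := by
  decide

-- `s k` is the position at which a new vertex is inserted into the `k`-th order of the triangle.
set_option maxRecDepth 10000 in
theorem exists_cuts_of_perms : ∀ σ : Fin 3 → Equiv.Perm (Fin 3),
    (∀ i j, i ≠ j → ∃ k, σ k i < σ k j) → ∀ d : Fin 3 → Bool,
    ∃ s : Fin 3 → Fin 4, ∀ i, #{k | (σ k i : ℕ) < s k} = if d i then 2 else 1 := by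
  decide

theorem exists_insertion_values (g : Fin 3 → Fin 3 → ℚ) (hinj : ∀ k, Function.Injective (g k))
    (hmix : ∀ i j, i ≠ j → ∃ k, g k i < g k j) (d : Fin 3 → Bool) :
    ∃ q : Fin 3 → ℚ, ∀ i, (∀ k, g k i ≠ q k) ∧ #{k | g k i < q k} = if d i then 2 else 1 := by
  choose σ hσ using fun k => exists_perm_lt_iff_lt (hinj k)
  obtain ⟨s, hs⟩ := exists_cuts_of_perms σ
    (fun i j hij => (hmix i j hij).imp fun k => (hσ k i j).2) d
  choose q hq using fun k => exists_cut (g k) (fun i => (σ k i : ℕ) < s k)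
    fun i j hi hj => (hσ k i j).1 (Fin.lt_def.2 (by omega))
  refine ⟨q, fun i => ⟨fun k => (hq k i).1, ?_⟩⟩
  rw [← hs i]
  exact congrArg card (filter_congr fun k _ => (hq k i).2)

section Realizer

variable {V : Type*} {G : SimpleGraph V} {A : V → V → Prop}

def IsRealizer (G : SimpleGraph V) (A : V → V → Prop) (f : Fin 3 → V → ℚ) : Prop :=
  ∀ ⦃u w⦄, G.Adj u w → (∀ k, f k u ≠ f k w) ∧ 0 < #{k | f k u < f k w} ∧
    (A u w → 2 ≤ #{k | f k u < f k w})

theorem IsRealizer.subsingleton_setOf_not_lt {f : Fin 3 → V → ℚ} (hf : IsRealizer G A f)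
    {u w : V} (huw : G.Adj u w) (h : A u w) : {k | ¬ f k u < f k w}.Subsingleton :=
  subsingleton_setOf_not_of_two_le_card ((hf huw).2.2 h)

theorem exists_isRealizer_of_adj_mem_range (hA : ∀ u w, A u w → ¬ A w u) {vtx : Fin 3 → V}
    (hvtx : Function.Injective vtx)
    (hG : ∀ u w, G.Adj u w → u ∈ Set.range vtx ∧ w ∈ Set.range vtx) :
    ∃ f, IsRealizer G A f := by
  classical
  obtain ⟨σ, hmix, harc⟩ := exists_perms_of_asymm (fun i j => decide (A (vtx i) (vtx j)))
    (by simpa using fun i j => hA (vtx i) (vtx j))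
  refine ⟨fun k x => ((σ k (Function.invFun vtx x) : ℕ) : ℚ), fun u w huw => ?_⟩
  obtain ⟨⟨i, rfl⟩, ⟨j, rfl⟩⟩ := hG _ _ huw
  have hij : i ≠ j := fun h => huw.ne (h ▸ rfl)
  simp only [Function.leftInverse_invFun hvtx _, Nat.cast_lt, ← Fin.lt_def]
  refine ⟨fun k h => hij ((σ k).injective (Fin.ext (by exact_mod_cast h))), ?_,
    fun h => harc i j (by simpa using h)⟩
  obtain ⟨k, hk⟩ := hmix i j hij
  exact card_pos.2 ⟨k, by simpa using hk⟩

theorem IsRealizer.exists_sup_star {f : Fin 3 → V → ℚ} (hf : IsRealizer G A f)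
    (hA : ∀ u w, A u w → ¬ A w u) {vtx : Fin 3 → V}
    (hvtx : ∀ i j, i ≠ j → G.Adj (vtx i) (vtx j)) {v : V} (hv : ∀ u, ¬ G.Adj v u) :
    ∃ f', IsRealizer (G ⊔ SimpleGraph.fromRel fun x y => x = v ∧ y ∈ Set.range vtx) A f' := by
  classical
  obtain ⟨q, hq⟩ := exists_insertion_values (fun k i => f k (vtx i))
    (fun k i j hij => by_contra fun hne => (hf (hvtx i j hne)).1 k hij)
    (fun i j hij => card_pos.1 (hf (hvtx i j hij)).2.1 |>.imp fun k hk => by simpa using hk)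
    (fun i => decide (A (vtx i) v))
  have hvtx_ne : ∀ i, vtx i ≠ v := fun i h => hv _ (h ▸ hvtx i (i + 1) (by fin_cases i <;> decide))
  set f' : Fin 3 → V → ℚ := fun k => Function.update (f k) v (q k)
  have hold : ∀ k {u}, u ≠ v → f' k u = f k u := fun k _ hu => Function.update_of_ne hu _ _
  have hnew : ∀ k, f' k v = q k := fun k => Function.update_self _ _ _
  have hne : ∀ i k, f' k (vtx i) ≠ f' k v := fun i k => by
    rw [hold k (hvtx_ne i), hnew]
    exact (hq i).1 k
  have hcnt : ∀ i, #{k | f' k (vtx i) < f' k v} = if A (vtx i) v then 2 else 1 := fun i => by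
    simp only [hold _ (hvtx_ne i), hnew]
    simpa using (hq i).2
  have hcnt' : ∀ i, #{k | f' k v < f' k (vtx i)} = if A (vtx i) v then 1 else 2 := fun i => by
    have := card_filter_lt_add_card_filter_gt (hne i)
    rw [hcnt i, Fintype.card_fin] at this
    split_ifs at this ⊢ <;> omega
  refine ⟨f', fun u w huw => ?_⟩
  rw [SimpleGraph.sup_adj, SimpleGraph.fromRel_adj] at huw
  rcases huw with huw | ⟨-, ⟨rfl, i, rfl⟩ | ⟨rfl, i, rfl⟩⟩
  · have hu : u ≠ v := fun h => hv w (h ▸ huw)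
    have hw : w ≠ v := fun h => hv u (h ▸ huw.symm)
    simpa only [hold _ hu, hold _ hw] using hf huw
  · refine ⟨fun k => (hne i k).symm, by rw [hcnt' i]; split_ifs <;> norm_num, fun h => ?_⟩
    rw [hcnt' i, if_neg (hA _ _ h)]
  · refine ⟨hne i, by rw [hcnt i]; split_ifs <;> norm_num, fun h => ?_⟩
    rw [hcnt i, if_pos h]

end Realizer

theorem range_vecCons_three {V : Type*} (a b c : V) : Set.range ![a, b, c] = {a, b, c} := by
  ext
  simp [or_comm, or_left_comm, eq_comm]

theorem fromRel_triRel_adj {V : Type*} {a b c u w : V} :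
    (SimpleGraph.fromRel (triRel a b c)).Adj u w ↔
      u ≠ w ∧ u ∈ ({a, b, c} : Set V) ∧ w ∈ ({a, b, c} : Set V) := by
  simp only [SimpleGraph.fromRel_adj, triRel, and_comm (a := w ∈ _), or_self]

section ThreeTree

variable {V : Type*} [DecidableEq V] {G : SimpleGraph V} {S : Finset V}

theorem IsThreeTree.mem_of_adj (h : IsThreeTree G S) {u w : V} (huw : G.Adj u w) : u ∈ S := by
  induction h generalizing u w with
  | base a b c =>
    simpa using (fromRel_triRel_adj.1 huw).2.1
  | step G S a b c v _ ha hb hc _ _ _ _ ih =>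
    rcases huw with huw | ⟨-, ⟨rfl, -⟩ | ⟨-, hu⟩⟩
    · exact mem_insert_of_mem (ih huw)
    · exact mem_insert_self _ _
    · rcases hu with rfl | rfl | rfl <;> simp [ha, hb, hc]

theorem IsThreeTree.exists_isRealizer {A : V → V → Prop} (h : IsThreeTree G S)
    (hA : ∀ u w, A u w → ¬ A w u) : ∃ f, IsRealizer G A f := by
  induction h with
  | base a b c hab hac hbc =>
    refine exists_isRealizer_of_adj_mem_range hA (vtx := ![a, b, c]) ?_ fun u w huw => ?_
    · intro i j hij
      fin_cases i <;> fin_cases j <;> simp_all [eq_comm]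
    · simpa only [range_vecCons_three] using (fromRel_triRel_adj.1 huw).2
  | step G S a b c v hG _ _ _ hv hab hbc hac ih =>
    obtain ⟨f, hf⟩ := ih
    rw [← range_vecCons_three]
    refine hf.exists_sup_star hA (fun i j hij => ?_) fun u huv => hv (hG.mem_of_adj huv)
    fin_cases i <;> fin_cases j <;> simp_all [SimpleGraph.adj_comm]

end ThreeTree

theorem nu_eq_three_of_partial_threeTree_general {V : Type*} [DecidableEq V]
    (A : V → V → Prop)
    (hpartial : ∃ (H : SimpleGraph V) (S : Finset V),
      IsThreeTree H S ∧ SimpleGraph.fromRel A ≤ H)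
    (hg : digirth A = 3) :
    HasPacking A 3 ∧ dinu A = 3 := by
  obtain ⟨H, S, hH, hAH⟩ := hpartial
  have hloop : ∀ v, ¬ A v v := fun v h => by
    simpa [hg] using digirth_le_length (isDicycle_singleton.2 h)
  have hdigon : ∀ u w, A u w → ¬ A w u := fun u w h₁ h₂ => by
    simpa [hg] using digirth_le_length (isDicycle_pair (by rintro rfl; exact hloop u h₁) h₁ h₂)
  have hadj : ∀ u w, A u w → H.Adj u w := fun u w h =>
    hAH (SimpleGraph.fromRel_adj _ u w |>.2 ⟨fun e => hloop u (e ▸ h), Or.inl h⟩)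
  obtain ⟨f, hf⟩ := hH.exists_isRealizer hdigon
  have hpack : HasPacking A 3 := hasPacking_of_subsingleton_setOf_not_lt f
    fun u w h => hf.subsingleton_setOf_not_lt (hadj u w h) h
  obtain ⟨l, hl, hlen⟩ := exists_isDicycle_length_eq_digirth (A := A) (by omega)
  exact ⟨hpack, dinu_eq_of_hasPacking hpack hl (hlen.trans hg)⟩

/-- If `G` is a planar digraph with `g(G) = 3` whose underlying graph is a
partial 3-tree (a subgraph of a 3-tree), then `ν(G) = 3`: the arcs admit three pairwise
disjoint dicycle-transversals. -/
theorem nu_eq_three_of_partial_threeTree {V : Type*} [DecidableEq V]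
    (A : V → V → Prop)
    (hirr : ∀ v, ¬ A v v)
    (hpartial : ∃ (H : SimpleGraph V) (S : Finset V),
      IsThreeTree H S ∧ SimpleGraph.fromRel A ≤ H)
    (hplanar : IsPlanar (SimpleGraph.fromRel A))
    (hg : digirth A = 3) :
    HasPacking A 3 ∧ dinu A = 3 :=
  nu_eq_three_of_partial_threeTree_general A hpartial hg
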